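/- arXiv:1201.0805 — 7 statements merged into one kernel-verified Lean document; each statement's English description precedes it below -/
import Mathlib

section
/- If a finitely complete category C is diexact and has a strict initial object, then C is (finitary) extensive: it has finite coproducts, and these coproducts are disjoint and stable under pullback. -/
open CategoryTheory CategoryTheory.Limits

universe v u

section Defs

variable {C : Type u} [Category.{v} C]

/-- A span `(f, g)` is *jointly monic* if `u ≫ f = v ≫ f` and `u ≫ g = v ≫ g` imply `u = v`
(equivalently, the induced map into the product is a monomorphism). -/
def JointlyMonic {Z A B : C} (f : Z ⟶ A) (g : Z ⟶ B) : Prop :=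
  ∀ ⦃X : C⦄ (u v : X ⟶ Z), u ≫ f = v ≫ f → u ≫ g = v ≫ g → u = v

/-- `(P, π₁, π₂, π₃)` is the limit `C ×_B C ×_A C` of triples `(c₁, c₂, c₃)` of generalized
elements of `Z` with `g ∘ π₁ = g ∘ π₂` and `f ∘ π₂ = f ∘ π₃`. -/
structure IsTripleLimit {Z A B : C} (f : Z ⟶ A) (g : Z ⟶ B) {P : C}
    (π₁ π₂ π₃ : P ⟶ Z) : Prop where
  w₁ : π₁ ≫ g = π₂ ≫ g
  w₂ : π₂ ≫ f = π₃ ≫ f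
  lift : ∀ ⦃X : C⦄ (x₁ x₂ x₃ : X ⟶ Z), x₁ ≫ g = x₂ ≫ g → x₂ ≫ f = x₃ ≫ f →
    ∃! u : X ⟶ P, u ≫ π₁ = x₁ ∧ u ≫ π₂ = x₂ ∧ u ≫ π₃ = x₃

/-- A jointly monic span `(f, g)` is a *Mal'cev span* if, for the limit
`P = C ×_B C ×_A C`, there exists `p : P ⟶ C` with `f ∘ p = f ∘ π₁` and `g ∘ p = g ∘ π₃`. -/
def IsMalcevSpan {Z A B : C} (f : Z ⟶ A) (g : Z ⟶ B) : Prop :=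
  JointlyMonic f g ∧
  ∀ ⦃P : C⦄ (π₁ π₂ π₃ : P ⟶ Z), IsTripleLimit f g π₁ π₂ π₃ →
    ∃ p : P ⟶ Z, p ≫ f = π₁ ≫ f ∧ p ≫ g = π₃ ≫ g

/-- A commuting square (with legs `f, g` and colegs `h, k`) is *stable under pullback* if
every commutative cube over it whose four side faces are pullbacks has a pushout top face. -/
def PushoutStable {Z A B D : C} (f : Z ⟶ A) (g : Z ⟶ B) (h : A ⟶ D) (k : B ⟶ D) : Prop :=
  ∀ ⦃Z' A' B' D' : C⦄ (f' : Z' ⟶ A') (g' : Z' ⟶ B') (h' : A' ⟶ D') (k' : B' ⟶ D')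
    (αZ : Z' ⟶ Z) (αA : A' ⟶ A) (αB : B' ⟶ B) (αD : D' ⟶ D),
    IsPullback f' αZ αA f → IsPullback g' αZ αB g →
    IsPullback h' αA αD h → IsPullback k' αB αD k →
    f' ≫ h' = g' ≫ k' → IsPushout f' g' h' k'

/-- A category is *diexact* if every Mal'cev span admits a pushout, and every pushout square
of a Mal'cev span is stable under pullback and is itself a pullback square. -/
def Diexact (C : Type u) [Category.{v} C] : Prop :=
  ∀ ⦃Z A B : C⦄ (f : Z ⟶ A) (g : Z ⟶ B), IsMalcevSpan f g →
    (∃ (D : C) (h : A ⟶ D) (k : B ⟶ D), IsPushout f g h k) ∧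
    ∀ ⦃D : C⦄ (h : A ⟶ D) (k : B ⟶ D), IsPushout f g h k →
      PushoutStable f g h k ∧ IsPullback f g h k

/-- An internal equivalence relation: a jointly monic pair which is reflexive, symmetric
and transitive. -/
def IsEquivRelation [HasPullbacks C] {E A : C} (s t : E ⟶ A) : Prop :=
  JointlyMonic s t ∧
  (∃ r : A ⟶ E, r ≫ s = 𝟙 A ∧ r ≫ t = 𝟙 A) ∧
  (∃ σ : E ⟶ E, σ ≫ s = t ∧ σ ≫ t = s) ∧
  (∃ τ : pullback t s ⟶ E,
     τ ≫ s = pullback.fst t s ≫ s ∧ τ ≫ t = pullback.snd t s ≫ t)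

/-- A finitely complete category is *Barr-exact* if every kernel pair has a coequaliser,
regular epimorphisms are stable under pullback, and every internal equivalence relation is
effective (i.e. a kernel pair). -/
def BarrExact (C : Type u) [Category.{v} C] [HasFiniteLimits C] : Prop :=
  (∀ ⦃X Y : C⦄ (f : X ⟶ Y), HasCoequalizer (pullback.fst f f) (pullback.snd f f)) ∧
  (∀ ⦃X Y W : C⦄ (f : X ⟶ Y) (g : W ⟶ Y),
     Nonempty (RegularEpi f) → Nonempty (RegularEpi (pullback.snd f g))) ∧
  (∀ ⦃E A : C⦄ (s t : E ⟶ A), IsEquivRelation s t →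
     ∃ (Q : C) (q : A ⟶ Q), IsPullback s t q q)

/-- A category is *amalgamable* if every span of monomorphisms admits a pushout which is
stable under pullback and is itself a pullback square. -/
def Amalgamable (C : Type u) [Category.{v} C] : Prop :=
  ∀ ⦃Z A B : C⦄ (f : Z ⟶ A) (g : Z ⟶ B), Mono f → Mono g →
    ∃ (D : C) (h : A ⟶ D) (k : B ⟶ D),
      IsPushout f g h k ∧ PushoutStable f g h k ∧ IsPullback f g h k

/-- A category is *adhesive* if it admits pushouts along monomorphisms, and these pushouts
are stable under pullback and are pullback squares. -/
def AdhesiveCat (C : Type u) [Category.{v} C] : Prop :=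
  ∀ ⦃Z A B : C⦄ (f : Z ⟶ A) (g : Z ⟶ B), Mono f →
    (∃ (D : C) (h : A ⟶ D) (k : B ⟶ D), IsPushout f g h k) ∧
    ∀ ⦃D : C⦄ (h : A ⟶ D) (k : B ⟶ D), IsPushout f g h k →
      PushoutStable f g h k ∧ IsPullback f g h k

/-- `u` factors through `v` (as morphisms into a common object `X`). -/
def FactorsThru {U V X : C} (u : U ⟶ X) (v : V ⟶ X) : Prop :=
  ∃ w : U ⟶ V, w ≫ v = u

/-- A monomorphism `m : P ⟶ X` is the *union* of the subobjects `a : A ⟶ X` and `b : B ⟶ X`: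
both factor through `m`, and `m` factors through any monomorphism through which both factor. -/
def IsUnionOf {A B P X : C} (a : A ⟶ X) (b : B ⟶ X) (m : P ⟶ X) : Prop :=
  Mono m ∧ FactorsThru a m ∧ FactorsThru b m ∧
  ∀ ⦃Q : C⦄ (c : Q ⟶ X), Mono c → FactorsThru a c → FactorsThru b c → FactorsThru m c

end Defs

/-!
Over a strict initial object `0`, maps into `0` are unique, so the span `X ← 0 → Y` is a Mal'cev
span, and its pushouts are exactly the coproducts of `X` and `Y`. Diexactness therefore provides
binary coproducts and makes every coproduct square a pullback (disjointness) that is stable under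
pullback (universality). Pulling a coproduct back along a map `x : T ⟶ X' ⨿ Y'` whose pullback to
`Y'` is initial shows that `x` factors through `X'`; applied to `x = inl` this makes the
coprojections monic, and in general it gives the pullback half of the van Kampen condition.
-/

section StrictInitial

variable {C : Type u} [Category.{v} C] [HasInitial C] [HasStrictInitialObjects C]

lemma isPullback_initial_to {A' A : C} (α : A' ⟶ A) :
    IsPullback (initial.to A') (initial.to (⊥_ C)) α (initial.to A) :=
  IsPullback.mk' (initial.hom_ext _ _)
    (fun _ φ φ' _ _ => initialIsInitial.strict_hom_ext φ φ')
    (fun _ _ b _ => ⟨b, (IsInitial.ofStrict b initialIsInitial).hom_ext _ _,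
      initialIsInitial.strict_hom_ext _ _⟩)

lemma isMalcevSpan_initial_to (X Y : C) : IsMalcevSpan (initial.to X) (initial.to Y) :=
  ⟨fun _ u v _ _ => initialIsInitial.strict_hom_ext u v,
    fun _ π₁ _ π₃ _ => ⟨π₁, rfl, by rw [initialIsInitial.strict_hom_ext π₁ π₃]⟩⟩

end StrictInitial

namespace Diexact

variable {C : Type u} [Category.{v} C] [HasInitial C] [HasStrictInitialObjects C] {X Y : C}

lemma hasBinaryCoproducts (hC : Diexact C) : HasBinaryCoproducts C :=
  @hasBinaryCoproducts_of_hasColimit_pair _ _ fun {X Y} => by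
    obtain ⟨_, _, _, H⟩ := (hC _ _ (isMalcevSpan_initial_to X Y)).1
    exact ⟨⟨⟨_, isCoproductOfIsInitialIsPushout _ _ _ _ initialIsInitial H.isColimit⟩⟩⟩

lemma pushoutStable_binaryCofan (hC : Diexact C) {c : BinaryCofan X Y} (hc : IsColimit c) :
    PushoutStable (initial.to X) (initial.to Y) c.inl c.inr :=
  ((hC _ _ (isMalcevSpan_initial_to X Y)).2 _ _ (IsPushout.of_is_coproduct hc initialIsInitial)).1

lemma isPullback_initial_to_binaryCofan (hC : Diexact C) {c : BinaryCofan X Y}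
    (hc : IsColimit c) : IsPullback (initial.to X) (initial.to Y) c.inl c.inr :=
  ((hC _ _ (isMalcevSpan_initial_to X Y)).2 _ _ (IsPushout.of_is_coproduct hc initialIsInitial)).2

lemma nonempty_isColimit_of_isPullback (hC : Diexact C) {c : BinaryCofan X Y}
    (hc : IsColimit c) {X' Y' : C} (c' : BinaryCofan X' Y') (αX : X' ⟶ X) (αY : Y' ⟶ Y)
    (f : c'.pt ⟶ c.pt) (hX : IsPullback c'.inl αX f c.inl) (hY : IsPullback c'.inr αY f c.inr) :
    Nonempty (IsColimit c') := by
  have H := hC.pushoutStable_binaryCofan hc (initial.to X') (initial.to Y')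
    c'.inl c'.inr (initial.to _) αX αY f (isPullback_initial_to αX) (isPullback_initial_to αY)
    hX hY (initial.hom_ext _ _)
  exact ⟨(isCoproductOfIsInitialIsPushout _ _ _ _ initialIsInitial H.isColimit).ofIsoColimit
    (isoBinaryCofanMk c').symm⟩

variable [HasPullbacks C]

lemma isIso_pullback_fst_inl_of_isInitial (hC : Diexact C) {c : BinaryCofan X Y}
    (hc : IsColimit c) {T : C} (x : T ⟶ c.pt) (h : IsInitial (pullback x c.inr)) :
    IsIso (pullback.fst x c.inl) :=
  (BinaryCofan.isColimit_iff_isIso_inl h _).mp <|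
    hC.nonempty_isColimit_of_isPullback hc
      (BinaryCofan.mk (pullback.fst x c.inl) (pullback.fst x c.inr)) (pullback.snd _ _)
      (pullback.snd _ _) x (IsPullback.of_hasPullback _ _) (IsPullback.of_hasPullback _ _)

lemma mono_inl (hC : Diexact C) {c : BinaryCofan X Y} (hc : IsColimit c) : Mono c.inl :=
  (mono_iff_isIso_fst (pullbackIsPullback c.inl c.inl)).2 <|
    hC.isIso_pullback_fst_inl_of_isInitial hc c.inl <|
      initialIsInitial.ofIso (hC.isPullback_initial_to_binaryCofan hc).isoPullback

lemma isPullback_inl (hC : Diexact C) {P : C} {inl : X ⟶ P} {inr : Y ⟶ P}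
    (hc : IsColimit (BinaryCofan.mk inl inr)) {X' Y' P' : C} {inl' : X' ⟶ P'} {inr' : Y' ⟶ P'}
    (hc' : IsColimit (BinaryCofan.mk inl' inr')) (αX : X' ⟶ X) (αY : Y' ⟶ Y) (f : P' ⟶ P)
    (hX : αX ≫ inl = inl' ≫ f) (hY : αY ≫ inr = inr' ≫ f) :
    IsPullback inl' αX f inl := by
  have : Mono inl := hC.mono_inl hc
  have : Mono inl' := hC.mono_inl hc'
  refine IsPullback.mk' hX.symm (fun _ _ _ h _ => (cancel_mono inl').1 h) fun T a b hab => ?_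
  have w : (pullback.fst a inr' ≫ b) ≫ inl = (pullback.snd a inr' ≫ αY) ≫ inr := by
    simp only [Category.assoc, ← hab, pullback.condition_assoc, hY]
  have : IsIso (pullback.fst a inl') := hC.isIso_pullback_fst_inl_of_isInitial hc' a <|
    IsInitial.ofStrict ((hC.isPullback_initial_to_binaryCofan hc).lift _ _ w) initialIsInitial
  have hl : inv (pullback.fst a inl') ≫ pullback.snd a inl' ≫ inl' = a := by
    rw [← pullback.condition, IsIso.inv_hom_id_assoc]
  refine ⟨inv (pullback.fst a inl') ≫ pullback.snd a inl', (Category.assoc _ _ _).trans hl, ?_⟩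
  simp only [← cancel_mono inl, Category.assoc, hX, reassoc_of% hl, hab]

lemma isVanKampen_binaryCofan (hC : Diexact C) {c : BinaryCofan X Y} (hc : IsColimit c) :
    IsVanKampenColimit c := by
  rw [BinaryCofan.isVanKampen_iff]
  intro X' Y' c' αX αY f hX hY
  refine ⟨fun ⟨hc'⟩ => ?_,
    fun ⟨h₁, h₂⟩ => hC.nonempty_isColimit_of_isPullback hc c' αX αY f h₁ h₂⟩
  replace hc := hc.ofIsoColimit (isoBinaryCofanMk c)
  replace hc' := hc'.ofIsoColimit (isoBinaryCofanMk c')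
  exact ⟨hC.isPullback_inl hc hc' αX αY f hX hY, hC.isPullback_inl (BinaryCofan.isColimitFlip hc)
    (BinaryCofan.isColimitFlip hc') αY αX f hY hX⟩

end Diexact

/-- A finitely complete diexact category with a strict initial object is
(finitary) extensive. -/
theorem extensive_of_diexact_strictInitial {C : Type u} [Category.{v} C]
    [HasFiniteLimits C] [HasInitial C] [HasStrictInitialObjects C]
    (hC : Diexact C) : FinitaryExtensive C := by
  have := hC.hasBinaryCoproducts
  have : HasFiniteCoproducts C := hasFiniteCoproducts_of_has_binary_and_initial
  exact ⟨fun c hc => hC.isVanKampen_binaryCofan hc⟩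
end

section
/- Every finitely complete diexact category is Barr-exact: every internal equivalence relation (s, t) : E ⇉ A admits a coequaliser which is stable under pullback, and (s, t) is the kernel pair of that coequaliser. -/
open CategoryTheory CategoryTheory.Limits

universe v u

/-!
An equivalence relation `(s, t)` is a Mal'cev span: given `c₁, c₂, c₃` with `t c₁ = t c₂` and
`s c₂ = s c₃`, transitivity applied to `(c₁, σ c₂)` and then to the result and `c₃` gives `p`.
Diexactness therefore provides a pushout `(h, k)` of `(s, t)`, and reflexivity forces `h = k`.
A pushout with equal colegs is exactly a coequaliser, so pullback-stability of the pushout is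
pullback-stability of the coequaliser, and the pushout being a pullback says that `(s, t)` is
the kernel pair of `h`.
-/

section

variable {C : Type u} [Category.{v} C]

theorem CategoryTheory.IsPushout.nonempty_isColimit_cofork {Z A D : C} {f g : Z ⟶ A}
    {q : A ⟶ D} (hpo : IsPushout f g q q) (w : f ≫ q = g ≫ q) :
    Nonempty (IsColimit (Cofork.ofπ q w)) :=
  ⟨Cofork.IsColimit.mk _ (fun c => hpo.desc c.π c.π c.condition)
    (fun c => hpo.inl_desc _ _ _)
    (fun c m hm => hpo.hom_ext (by rw [hpo.inl_desc]; exact hm) (by rw [hpo.inr_desc]; exact hm))⟩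

theorem eq_of_comp_eq_of_common_section {E A D : C} {s t : E ⟶ A} {r : A ⟶ E}
    (hrs : r ≫ s = 𝟙 A) (hrt : r ≫ t = 𝟙 A) {h k : A ⟶ D} (w : s ≫ h = t ≫ k) : h = k :=
  calc h = r ≫ s ≫ h := by rw [← Category.assoc, hrs, Category.id_comp]
    _ = r ≫ t ≫ k := by rw [w]
    _ = k := by rw [← Category.assoc, hrt, Category.id_comp]

theorem exists_trans_of_pullback_trans [HasPullbacks C] {E A : C} {s t : E ⟶ A}
    {τ : pullback t s ⟶ E} (hτs : τ ≫ s = pullback.fst t s ≫ s)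
    (hτt : τ ≫ t = pullback.snd t s ≫ t) {X : C} (x y : X ⟶ E) (hxy : x ≫ t = y ≫ s) :
    ∃ z : X ⟶ E, z ≫ s = x ≫ s ∧ z ≫ t = y ≫ t :=
  ⟨pullback.lift x y hxy ≫ τ, by rw [Category.assoc, hτs, pullback.lift_fst_assoc],
    by rw [Category.assoc, hτt, pullback.lift_snd_assoc]⟩

theorem isMalcevSpan_of_symm_of_trans [HasPullbacks C] {E A : C} {s t : E ⟶ A}
    (hjm : JointlyMonic s t) {σ : E ⟶ E} (hσs : σ ≫ s = t) (hσt : σ ≫ t = s)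
    {τ : pullback t s ⟶ E} (hτs : τ ≫ s = pullback.fst t s ≫ s)
    (hτt : τ ≫ t = pullback.snd t s ≫ t) : IsMalcevSpan s t := by
  refine ⟨hjm, fun P π₁ π₂ π₃ hP => ?_⟩
  obtain ⟨e, hes, het⟩ := exists_trans_of_pullback_trans hτs hτt π₁ (π₂ ≫ σ)
    (by rw [Category.assoc, hσs, hP.w₁])
  rw [Category.assoc, hσt, hP.w₂] at het
  obtain ⟨p, hps, hpt⟩ := exists_trans_of_pullback_trans hτs hτt e π₃ het
  exact ⟨p, hps.trans hes, hpt⟩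

end

/-- In a finitely complete diexact category, every internal equivalence
relation `(s, t) : E ⇉ A` admits a coequaliser which is stable under pullback, and `(s, t)`
is the kernel pair of that coequaliser. -/
theorem diexact_barrExact {C : Type u} [Category.{v} C] [HasFiniteLimits C]
    (hC : Diexact C) {E A : C} (s t : E ⟶ A) (hrel : IsEquivRelation s t) :
    ∃ (Q : C) (q : A ⟶ Q) (w : s ≫ q = t ≫ q),
      Nonempty (IsColimit (Cofork.ofπ q w)) ∧
      (∀ ⦃E' A' Q' : C⦄ (s' t' : E' ⟶ A') (q' : A' ⟶ Q')
          (αE : E' ⟶ E) (αA : A' ⟶ A) (αQ : Q' ⟶ Q),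
        IsPullback s' αE αA s → IsPullback t' αE αA t → IsPullback q' αA αQ q →
        ∀ (w' : s' ≫ q' = t' ≫ q'), Nonempty (IsColimit (Cofork.ofπ q' w'))) ∧
      IsPullback s t q q := by
  obtain ⟨hjm, ⟨r, hrs, hrt⟩, ⟨σ, hσs, hσt⟩, ⟨τ, hτs, hτt⟩⟩ := hrel
  obtain ⟨⟨D, h, k, hpo⟩, hpushout⟩ :=
    hC s t (isMalcevSpan_of_symm_of_trans hjm hσs hσt hτs hτt)
  obtain rfl : h = k := eq_of_comp_eq_of_common_section hrs hrt hpo.w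
  obtain ⟨hstable, hpb⟩ := hpushout h h hpo
  refine ⟨D, h, hpo.w, hpo.nonempty_isColimit_cofork hpo.w, ?_, hpb⟩
  intro E' A' Q' s' t' q' αE αA αQ hs' ht' hq' w'
  exact (hstable s' t' q' q' αE αA αA αQ hs' ht' hq' hq' w').nonempty_isColimit_cofork w'
end

section
/- Let C be a finitely complete, Barr-exact and amalgamable category. Then C admits stable binary unions of subobjects: given monomorphisms a : A ↣ X and b : B ↣ X, form the pullback A ∩ B with projections to A and B, and then the pushout P of the span A ← A ∩ B → B; the induced morphism P → X is a monomorphism, and it exhibits P as the union of the subobjects a and b, this union being stable under pullback. -/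
open CategoryTheory CategoryTheory.Limits

universe v u

/-!
Amalgamability makes the pushout square of `A ← A ∩ B → B` stable under pullback, as
stability is invariant under isomorphism of pushouts. Pulling it back along any
`t : T ⟶ P` thus gives a pushout with vertex `T`; hence `T` is covered, jointly epimorphically, by the
parts on which `t` factors through `A` or through `B`. Testing `t₁ ≫ m = t₂ ≫ m` on these
parts, and then once more for `t₂`, reduces it to the monomorphy of `a` and `b` and the
universal property of `A ∩ B`; so `m` is a monomorphism. A monic map out of a pushout of a
span over `a` and `b` is their union, by the universal property of the pushout, and pulling
back along `y : Y ⟶ X` yields again such a pushout, by stability.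
-/

section

variable {C : Type u} [Category.{v} C]

lemma PushoutStable.flip {Z A B D : C} {f : Z ⟶ A} {g : Z ⟶ B} {h : A ⟶ D} {k : B ⟶ D}
    (hs : PushoutStable f g h k) : PushoutStable g f k h :=
  fun _ _ _ _ g' f' k' h' αZ αB αA αD pg pf pk ph w =>
    (hs f' g' h' k' αZ αA αB αD pf pg ph pk w.symm).flip

lemma PushoutStable.of_isPushout {Z A B D D' : C} {f : Z ⟶ A} {g : Z ⟶ B}
    {h : A ⟶ D} {k : B ⟶ D} {h' : A ⟶ D'} {k' : B ⟶ D'}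
    (hs : PushoutStable f g h k) (po : IsPushout f g h k) (po' : IsPushout f g h' k') :
    PushoutStable f g h' k' := by
  intro Z₁ A₁ B₁ D₁ f₁ g₁ h₁ k₁ αZ αA αB αD pf pg ph pk w
  let e := po'.isoIsPushout _ _ po
  refine hs f₁ g₁ h₁ k₁ αZ αA αB (αD ≫ e.hom) pf pg ?_ ?_ w
  · exact ph.of_iso (Iso.refl _) (Iso.refl _) (Iso.refl _) e (by simp) (by simp) (by simp)
      (by simp [e])
  · exact pk.of_iso (Iso.refl _) (Iso.refl _) (Iso.refl _) e (by simp) (by simp) (by simp)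
      (by simp [e])

/-- Of the four side faces of a cube, the one over `g` need not be assumed a pullback: its
composite with the face over `k` is the composite of the faces over `f` and `h`. -/
lemma PushoutStable.isPushout_of_isPullback {Z A B D Z' A' B' D' : C}
    {f : Z ⟶ A} {g : Z ⟶ B} {h : A ⟶ D} {k : B ⟶ D}
    {f' : Z' ⟶ A'} {g' : Z' ⟶ B'} {h' : A' ⟶ D'} {k' : B' ⟶ D'}
    {αZ : Z' ⟶ Z} {αA : A' ⟶ A} {αB : B' ⟶ B} {αD : D' ⟶ D}
    (hs : PushoutStable f g h k) (w : f ≫ h = g ≫ k)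
    (pf : IsPullback f' αZ αA f) (ph : IsPullback h' αA αD h) (pk : IsPullback k' αB αD k)
    (hg : g' ≫ αB = αZ ≫ g) (w' : f' ≫ h' = g' ≫ k') : IsPushout f' g' h' k' := by
  have pg : IsPullback g' αZ αB g := by
    refine IsPullback.of_right ?_ hg pk
    rw [← w, ← w']
    exact pf.paste_horiz ph
  exact hs f' g' h' k' αZ αA αB αD pf pg ph pk w'

lemma isUnionOf_of_isPushout {Z A B P X : C} {f : Z ⟶ A} {g : Z ⟶ B}
    {inl : A ⟶ P} {inr : B ⟶ P} {a : A ⟶ X} {b : B ⟶ X} {m : P ⟶ X} [Mono m]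
    (sq : IsPushout f g inl inr) (hl : inl ≫ m = a) (hr : inr ≫ m = b) : IsUnionOf a b m := by
  refine ⟨inferInstance, ⟨inl, hl⟩, ⟨inr, hr⟩,
    fun Q c _ ⟨wa, hwa⟩ ⟨wb, hwb⟩ => ⟨sq.desc wa wb ?_, ?_⟩⟩
  · rw [← cancel_mono c, Category.assoc, Category.assoc, hwa, hwb, ← hl, ← hr, sq.w_assoc]
  · apply sq.hom_ext <;> simp [hwa, hwb, hl, hr]

variable [HasPullbacks C]

lemma PushoutStable.hom_ext_of_pullback {Z A B D : C}
    {f : Z ⟶ A} {g : Z ⟶ B} {h : A ⟶ D} {k : B ⟶ D}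
    (hs : PushoutStable f g h k) (w : f ≫ h = g ≫ k) {T W : C} (t : T ⟶ D) {u v : T ⟶ W}
    (hA : pullback.fst t h ≫ u = pullback.fst t h ≫ v)
    (hB : pullback.fst t k ≫ u = pullback.fst t k ≫ v) : u = v := by
  let g' : pullback (pullback.snd t h) f ⟶ pullback t k :=
    pullback.lift (pullback.fst _ _ ≫ pullback.fst t h) (pullback.snd _ _ ≫ g) (by
      rw [Category.assoc, pullback.condition, pullback.condition_assoc, Category.assoc, w])
  have po := hs.isPushout_of_isPullback (g' := g') w (IsPullback.of_hasPullback _ _)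
    (IsPullback.of_hasPullback t h) (IsPullback.of_hasPullback t k)
    (pullback.lift_snd _ _ _) (pullback.lift_fst _ _ _).symm
  exact po.hom_ext hA hB

lemma PushoutStable.comp_inl_eq {Z A B P X : C} {f : Z ⟶ A} {g : Z ⟶ B}
    {inl : A ⟶ P} {inr : B ⟶ P} {a : A ⟶ X} {b : B ⟶ X} {m : P ⟶ X} [Mono a]
    (hs : PushoutStable f g inl inr) (w : f ≫ inl = g ≫ inr) (hZ : IsPullback f g a b)
    (hl : inl ≫ m = a) (hr : inr ≫ m = b) {S : C} {q : S ⟶ A} {s : S ⟶ P}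
    (hq : q ≫ a = s ≫ m) : q ≫ inl = s := by
  refine hs.hom_ext_of_pullback w s ?_ ?_
  · have hA : pullback.fst s inl ≫ q = pullback.snd s inl := by
      rw [← cancel_mono a, Category.assoc, hq, pullback.condition_assoc, hl]
    rw [reassoc_of% hA, pullback.condition]
  · have hB : (pullback.fst s inr ≫ q) ≫ a = pullback.snd s inr ≫ b := by
      rw [Category.assoc, hq, pullback.condition_assoc, hr]
    calc pullback.fst s inr ≫ q ≫ inl = hZ.lift _ _ hB ≫ f ≫ inl := by
          rw [hZ.lift_fst_assoc, Category.assoc]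
      _ = hZ.lift _ _ hB ≫ g ≫ inr := by rw [w]
      _ = pullback.fst s inr ≫ s := by rw [hZ.lift_snd_assoc, pullback.condition]

lemma PushoutStable.mono {Z A B P X : C} {f : Z ⟶ A} {g : Z ⟶ B}
    {inl : A ⟶ P} {inr : B ⟶ P} {a : A ⟶ X} {b : B ⟶ X} {m : P ⟶ X} [Mono a] [Mono b]
    (hs : PushoutStable f g inl inr) (w : f ≫ inl = g ≫ inr) (hZ : IsPullback f g a b)
    (hl : inl ≫ m = a) (hr : inr ≫ m = b) : Mono m := by
  refine ⟨fun {T} t₁ t₂ ht => hs.hom_ext_of_pullback w t₁ ?_ ?_⟩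
  · rw [pullback.condition]
    exact hs.comp_inl_eq w hZ hl hr (by rw [Category.assoc, ← ht, pullback.condition_assoc, hl])
  · rw [pullback.condition]
    exact hs.flip.comp_inl_eq w.symm hZ.flip hr hl
      (by rw [Category.assoc, ← ht, pullback.condition_assoc, hr])

lemma PushoutStable.exists_isPushout_pullback {Z A B P X : C} {f : Z ⟶ A} {g : Z ⟶ B}
    {inl : A ⟶ P} {inr : B ⟶ P} {a : A ⟶ X} {b : B ⟶ X} {m : P ⟶ X}
    (hs : PushoutStable f g inl inr) (w : f ≫ inl = g ≫ inr)
    (hl : inl ≫ m = a) (hr : inr ≫ m = b) {Y : C} (y : Y ⟶ X) :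
    ∃ (Z' : C) (f' : Z' ⟶ pullback a y) (g' : Z' ⟶ pullback b y)
      (inl' : pullback a y ⟶ pullback m y) (inr' : pullback b y ⟶ pullback m y),
      IsPushout f' g' inl' inr' ∧ inl' ≫ pullback.snd m y = pullback.snd a y ∧
        inr' ≫ pullback.snd m y = pullback.snd b y := by
  subst hl hr
  have pm := (IsPullback.of_hasPullback m y).flip
  have pA := IsPullback.of_right' (IsPullback.of_hasPullback (inl ≫ m) y).flip pm
  have pB := IsPullback.of_right' (IsPullback.of_hasPullback (inr ≫ m) y).flip pm
  let g' : pullback (pullback.fst (inl ≫ m) y) f ⟶ pullback (inr ≫ m) y :=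
    pullback.lift (pullback.snd _ _ ≫ g) (pullback.fst _ _ ≫ pullback.snd _ y) (by
      simp only [Category.assoc, ← reassoc_of% w, ← pullback.condition_assoc,
        pullback.condition])
  refine ⟨_, pullback.fst _ _, g', _, _, hs.isPushout_of_isPullback (g' := g') w
    (IsPullback.of_hasPullback _ _) pA pB (pullback.lift_fst _ _ _) ?_,
    pm.lift_fst _ _ _, pm.lift_fst _ _ _⟩
  apply pm.hom_ext
  · simp only [Category.assoc, IsPullback.lift_fst]
    rw [pullback.lift_snd]
  · simp only [Category.assoc, IsPullback.lift_snd]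
    rw [pullback.lift_fst_assoc, pullback.condition_assoc, Category.assoc, w]

end

theorem stable_binary_unions_general {C : Type u} [Category.{v} C] [HasFiniteLimits C]
    (hAm : Amalgamable C)
    {A B X : C} (a : A ⟶ X) (b : B ⟶ X) (ha : Mono a) (hb : Mono b)
    {P : C} (inl : A ⟶ P) (inr : B ⟶ P)
    (sq : IsPushout (pullback.fst a b) (pullback.snd a b) inl inr) :
    IsUnionOf a b (sq.desc a b pullback.condition) ∧
    ∀ ⦃Y : C⦄ (y : Y ⟶ X),
      IsUnionOf (pullback.snd a y) (pullback.snd b y)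
        (pullback.snd (sq.desc a b pullback.condition) y) := by
  have hl := sq.inl_desc a b pullback.condition
  have hr := sq.inr_desc a b pullback.condition
  obtain ⟨D, h, k, hD, hsD, -⟩ :=
    hAm (pullback.fst a b) (pullback.snd a b) inferInstance inferInstance
  have hs := hsD.of_isPushout hD sq
  have := hs.mono sq.w (IsPullback.of_hasPullback a b) hl hr
  refine ⟨isUnionOf_of_isPushout sq hl hr, fun Y y => ?_⟩
  obtain ⟨_, _, _, _, _, sq', hl', hr'⟩ := hs.exists_isPushout_pullback sq.w hl hr y
  exact isUnionOf_of_isPushout sq' hl' hr'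

/-- In a finitely complete, Barr-exact and amalgamable category, given
monomorphisms `a : A ⟶ X` and `b : B ⟶ X`, and a pushout `P` of the span
`A ← A ∩ B → B` (where `A ∩ B` is the pullback of `a` and `b`), the induced morphism
`P ⟶ X` is a monomorphism exhibiting `P` as the union of the subobjects `a` and `b`,
and this union is stable under pullback. -/
theorem stable_binary_unions {C : Type u} [Category.{v} C] [HasFiniteLimits C]
    (hBE : BarrExact C) (hAm : Amalgamable C)
    {A B X : C} (a : A ⟶ X) (b : B ⟶ X) (ha : Mono a) (hb : Mono b)
    {P : C} (inl : A ⟶ P) (inr : B ⟶ P)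
    (sq : IsPushout (pullback.fst a b) (pullback.snd a b) inl inr) :
    IsUnionOf a b (sq.desc a b pullback.condition) ∧
    ∀ ⦃Y : C⦄ (y : Y ⟶ X),
      IsUnionOf (pullback.snd a y) (pullback.snd b y)
        (pullback.snd (sq.desc a b pullback.condition) y) :=
  stable_binary_unions_general hAm a b ha hb inl inr sq
end

section
/- Every Grothendieck topos, i.e. every category of sheaves of sets on a small site, is diexact. -/
open CategoryTheory CategoryTheory.Limits

universe v u

/-!
Colimits in a Grothendieck topos are universal, so every pushout square there is stable under
pullback. In `Type` this is because a zigzag identifying two elements of a colimit lifts, step by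
step, along a cartesian map of diagrams; presheaf toposes inherit it pointwise, and sheaf toposes
from presheaves since sheafification is left exact.

It remains to see that the pushout of a Mal'cev span `(f, g)` is a pullback. Evaluation at an
object `x` of the site is corepresentable on sheaves (by the sheafified Yoneda presheaf of `x`), so
at every `x` the span is jointly injective and its relation is difunctional. For a difunctional
span of sets the equivalence relation generated on `A ⊕ B` is reached in at most two steps, so an
element of `A` and one of `B` are identified in the pushout only when they come from a common
element of `Z`. Hence the pushout of presheaves is a pullback, and sheafification preserves both.
-/

def Difunctional {Z A B : Type*} (f : Z → A) (g : Z → B) : Prop :=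
  ∀ z₁ z₂ z₃, g z₁ = g z₂ → f z₂ = f z₃ → ∃ z, f z = f z₁ ∧ g z = g z₃

universe w

namespace CategoryTheory

theorem Limits.Cocone.ι_eq_of_eqvGen {J : Type*} [Category* J] {F : J ⥤ Type w} (c : Cocone F)
    {p q : Σ j, F.obj j} (hpq : Relation.EqvGen F.ColimitTypeRel p q) :
    c.ι.app p.1 p.2 = c.ι.app q.1 q.2 :=
  congrArg (F.descColimitType (F.coconeTypesEquiv.symm c)) ((F.ιColimitType_eq_iff _ _).2 hpq)

namespace Limits.Types

section Difunctional

variable {Z A B : Type w} {f : Z ⟶ A} {g : Z ⟶ B}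

theorem Pushout.exists_of_inl_eq_inr (hd : Difunctional f g) {a : A} {b : B}
    (h : Pushout.inl f g a = Pushout.inr f g b) : ∃ z, f z = a ∧ g z = b := by
  -- the elements at distance at most two from `inl a` are closed under the generating relation
  let reach : A ⊕ B → Prop :=
    Sum.elim (fun a' ↦ a' = a ∨ ∃ z w, f z = a ∧ g z = g w ∧ f w = a')
      (fun b' ↦ ∃ z, f z = a ∧ g z = b')
  refine (congrArg (Quot.lift reach ?_) h).mp (Or.inl rfl)
  rintro _ _ ⟨z⟩
  refine propext ⟨?_, fun ⟨z₀, hz₀, hg⟩ ↦ .inr ⟨z₀, z, hz₀, hg, rfl⟩⟩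
  rintro (rfl | ⟨z₀, w, rfl, hg, hf⟩)
  · exact ⟨z, rfl, rfl⟩
  · exact hd z₀ w z hg hf

theorem isPullback_of_isPushout_of_difunctional {P : Type w} {h : A ⟶ P} {k : B ⟶ P}
    (hpo : IsPushout f g h k) (hinj : Function.Injective fun z ↦ (f z, g z))
    (hd : Difunctional f g) : IsPullback f g h k := by
  refine (isPullback_iff f h g k).2 ⟨hpo.w, fun z z' hzz' ↦ hinj (Prod.ext hzz'.1 hzz'.2),
    fun a b hab ↦ Pushout.exists_of_inl_eq_inr hd ?_⟩
  exact pushoutCocone_inl_eq_inr_imp_of_iso (c := PushoutCocone.mk h k hpo.w)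
    (Cocone.ext (IsColimit.coconePointUniqueUpToIso hpo.isColimit
      (Pushout.isColimitCocone f g)) (hpo.isColimit.comp_coconePointUniqueUpToIso_hom _)) a b hab

end Difunctional

section Universal

variable {J : Type*} [Category* J] {F F' : J ⥤ Type w} {c : Cocone F} {c' : Cocone F'}
  {α : F' ⟶ F} {f : c'.pt ⟶ c.pt}

theorem eqvGen_colimitTypeRel_lift (hf : ∀ j, IsPullback (c'.ι.app j) (α.app j) f (c.ι.app j))
    {p q : Σ j, F.obj j} (hpq : Relation.EqvGen F.ColimitTypeRel p q)
    (x : F'.obj p.1) (y : F'.obj q.1) (hx : α.app p.1 x = p.2) (hy : α.app q.1 y = q.2)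
    (hxy : c'.ι.app p.1 x = c'.ι.app q.1 y) :
    Relation.EqvGen F'.ColimitTypeRel ⟨p.1, x⟩ ⟨q.1, y⟩ := by
  induction hpq with
  | rel p q hpq =>
    obtain ⟨φ, hφ⟩ := hpq
    refine .rel _ _ ⟨φ, ext_of_isPullback (hf q.1) ?_ ?_⟩
    · rw [← hxy, c'.w_apply]
    · rw [hy, hφ, NatTrans.naturality_apply, hx]
  | refl p => exact ext_of_isPullback (hf p.1) hxy (hx.trans hy.symm) ▸ .refl _
  | symm p q _ ih => exact .symm _ _ (ih y x hy hx hxy.symm)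
  | trans p q r hpq _ ih₁ ih₂ =>
    have hq : f (c'.ι.app p.1 x) = c.ι.app q.1 q.2 := by
      rw [← c.ι_eq_of_eqvGen hpq, ← hx]
      exact ConcreteCategory.congr_hom (hf p.1).w x
    obtain ⟨z, hz, hz'⟩ := exists_of_isPullback (hf q.1) _ _ hq
    exact .trans _ _ _ (ih₁ x z hx hz' hz.symm) (ih₂ z y hz' hy (hz.trans hxy))

theorem isUniversalColimit (hc : IsColimit c) : IsUniversalColimit c := by
  intro F' c' α f _ _ hf
  have hc' := ((isColimit_iff_coconeTypesIsColimit c).1 ⟨hc⟩).bijective.1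
  have hcomm (j : J) (x : F'.obj j) : f (c'.ι.app j x) = c.ι.app j (α.app j x) :=
    ConcreteCategory.congr_hom (hf j).w x
  rw [isColimit_iff_coconeTypesIsColimit]
  refine ⟨⟨?_, ?_⟩⟩
  · rintro ⟨j, x⟩ ⟨j', y⟩ hxy
    replace hxy : c'.ι.app j x = c'.ι.app j' y := hxy
    have hαxy : F.ιColimitType j (α.app j x) = F.ιColimitType j' (α.app j' y) :=
      hc' (show c.ι.app j (α.app j x) = c.ι.app j' (α.app j' y) by rw [← hcomm, ← hcomm, hxy])
    exact (F'.ιColimitType_eq_iff x y).2 (eqvGen_colimitTypeRel_lift hf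
      ((F.ιColimitType_eq_iff _ _).1 hαxy) x y rfl rfl hxy)
  · rw [Functor.CoconeTypes.descColimitType_surjective_iff]
    intro z
    obtain ⟨j, y, hy⟩ := jointly_surjective_of_isColimit hc (f z)
    obtain ⟨x, hx, -⟩ := exists_of_isPullback (hf j) z y hy.symm
    exact ⟨j, x, hx⟩

end Universal

end Limits.Types

section FunctorToTypes

variable {J : Type*} [Category* J] {K : Type*} [Category* K]

theorem isUniversalColimit_of_evaluation {F : J ⥤ K ⥤ Type w} {c : Cocone F}
    (hc : ∀ x : K, IsUniversalColimit (((evaluation K (Type w)).obj x).mapCocone c)) :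
    IsUniversalColimit c := by
  intro F' c' α f e hα H
  refine ⟨evaluationJointlyReflectsColimits _ fun x ↦ ?_⟩
  refine (hc x (((evaluation K (Type w)).obj x).mapCocone c') (Functor.whiskerRight α _)
      (((evaluation K (Type w)).obj x).map f) ?_ (hα.whiskerRight _) fun j ↦ ?_).some
  · ext j : 2
    exact NatTrans.congr_app (NatTrans.congr_app e j) x
  · exact (H j).map ((evaluation K (Type w)).obj x)

theorem FunctorToTypes.isUniversalColimit [HasColimitsOfShape J (Type w)] {F : J ⥤ K ⥤ Type w}
    {c : Cocone F} (hc : IsColimit c) : IsUniversalColimit c :=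
  isUniversalColimit_of_evaluation fun x ↦
    Limits.Types.isUniversalColimit (isColimitOfPreserves ((evaluation K (Type w)).obj x) hc)

theorem FunctorToTypes.isPullback_of_isPushout_of_difunctional {Z A B P : K ⥤ Type w}
    {f : Z ⟶ A} {g : Z ⟶ B} {h : A ⟶ P} {k : B ⟶ P} (hpo : IsPushout f g h k)
    (hinj : ∀ x, Function.Injective fun z ↦ (f.app x z, g.app x z))
    (hd : ∀ x, Difunctional (f.app x) (g.app x)) : IsPullback f g h k :=
  .of_forall_isPullback_app fun x ↦
    Limits.Types.isPullback_of_isPushout_of_difunctional (hpo.app x) (hinj x) (hd x)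

end FunctorToTypes

section Reflective

variable {C : Type*} [Category* C] {D : Type*} [Category* D] {Gl : C ⥤ D} {Gr : D ⥤ C}
  [Gr.Full] [Gr.Faithful] [PreservesLimitsOfShape WalkingCospan Gl]

theorem isUniversalColimit_of_reflective {J : Type*} [Category* J] (adj : Gl ⊣ Gr)
    [HasColimitsOfShape J C] [HasPullbacks C]
    (hC : ∀ {F : J ⥤ C} {c : Cocone F}, IsColimit c → IsUniversalColimit c)
    {F : J ⥤ D} {c : Cocone F} (hc : IsColimit c) : IsUniversalColimit c := by
  have := adj.leftAdjoint_preservesColimits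
  let e : (F ⋙ Gr) ⋙ Gl ≅ F :=
    Functor.associator _ _ _ ≪≫ Functor.isoWhiskerLeft F (asIso adj.counit) ≪≫ F.rightUnitor
  have hU := ((hC (colimit.isColimit (F ⋙ Gr))).map_reflective adj).precompose_isIso e.inv
  exact hU.of_iso (IsColimit.uniqueUpToIso ((IsColimit.precomposeInvEquiv e _).symm
    (isColimitOfPreserves Gl (colimit.isColimit _))) hc)

theorem isPullback_of_isPushout_of_reflective (adj : Gl ⊣ Gr) {Z A B P : D} {f : Z ⟶ A}
    {g : Z ⟶ B} {h : A ⟶ P} {k : B ⟶ P} (hpo : IsPushout f g h k) {P₀ : C}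
    {h₀ : Gr.obj A ⟶ P₀} {k₀ : Gr.obj B ⟶ P₀} (hpo₀ : IsPushout (Gr.map f) (Gr.map g) h₀ k₀)
    (hpb₀ : IsPullback (Gr.map f) (Gr.map g) h₀ k₀) : IsPullback f g h k := by
  have := adj.leftAdjoint_preservesColimits
  let ε := asIso adj.counit
  have hpo₁ : IsPushout (Gl.map (Gr.map f)) (Gl.map (Gr.map g)) (ε.hom.app A ≫ h)
      (ε.hom.app B ≫ k) :=
    hpo.of_iso' (ε.app Z) (ε.app A) (ε.app B) (Iso.refl _) (ε.hom.naturality f).symm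
      (ε.hom.naturality g).symm (by simp) (by simp)
  let e := (hpo₀.map Gl).isoIsPushout _ _ hpo₁
  exact (hpb₀.map Gl).of_iso (ε.app Z) (ε.app A) (ε.app B) e (ε.hom.naturality f)
    (ε.hom.naturality g) (by simp [e]) (by simp [e])

end Reflective

end CategoryTheory

theorem PushoutStable.of_isUniversalColimit {C : Type*} [Category* C] {Z A B D : C}
    {f : Z ⟶ A} {g : Z ⟶ B} {h : A ⟶ D} {k : B ⟶ D} (w : f ≫ h = g ≫ k)
    (H : IsUniversalColimit (PushoutCocone.mk h k w)) : PushoutStable f g h k := by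
  intro Z' A' B' D' f' g' h' k' αZ αA αB αD hf hg hh hk w'
  let α : span f' g' ⟶ span f g := spanHomMk αZ αA αB hf.w hg.w
  have hα : NatTrans.Equifibered α := by
    rintro _ _ (_ | _ | _)
    · simp only [WidePushoutShape.hom_id]
      exact .of_horiz_isIso ⟨by simp⟩
    exacts [hf, hg]
  refine .of_isColimit' ⟨w'⟩ (H _ α αD ?_ hα ?_).some
  · ext (_ | _ | _)
    · change αZ ≫ f ≫ h = (f' ≫ h') ≫ αD
      rw [Category.assoc, hh.w, hf.w_assoc]
    exacts [hh.w.symm, hk.w.symm]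
  · rintro (_ | _ | _)
    · exact hf.paste_horiz hh
    exacts [hh, hk]

theorem isTripleLimit_pullback {C : Type*} [Category* C] [HasPullbacks C] {Z A B : C}
    (f : Z ⟶ A) (g : Z ⟶ B) :
    IsTripleLimit f g
      (pullback.fst (pullback.snd g g ≫ f) f ≫ pullback.fst g g)
      (pullback.fst (pullback.snd g g ≫ f) f ≫ pullback.snd g g)
      (pullback.snd (pullback.snd g g ≫ f) f) where
  w₁ := by simp only [Category.assoc, pullback.condition]
  w₂ := by rw [Category.assoc, pullback.condition]
  lift X x₁ x₂ x₃ h₁₂ h₂₃ := by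
    refine ⟨pullback.lift (pullback.lift x₁ x₂ h₁₂) x₃ (by rw [pullback.lift_snd_assoc, h₂₃]),
      by simp only [pullback.lift_fst_assoc, pullback.lift_fst, pullback.lift_snd, and_self], ?_⟩
    rintro u ⟨hu₁, hu₂, hu₃⟩
    ext
    · rw [Category.assoc, hu₁, pullback.lift_fst, pullback.lift_fst]
    · rw [Category.assoc, hu₂, pullback.lift_fst, pullback.lift_snd]
    · rw [hu₃, pullback.lift_snd]

section GeneralizedElements

variable {C : Type*} [Category.{v} C] {E : C ⥤ Type v} {X : C} {Z A B : C}
  {f : Z ⟶ A} {g : Z ⟶ B}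

theorem JointlyMonic.injective_map (hE : E.CorepresentableBy X) (h : JointlyMonic f g) :
    Function.Injective fun z ↦ (E.map f z, E.map g z) := by
  intro z z' hzz'
  obtain ⟨hf, hg⟩ := Prod.mk.inj hzz'
  apply hE.homEquiv.symm.injective
  apply h <;> rw [hE.homEquiv_symm_comp, hE.homEquiv_symm_comp]
  exacts [congrArg _ hf, congrArg _ hg]

theorem IsMalcevSpan.difunctional_map (hE : E.CorepresentableBy X) (h : IsMalcevSpan f g)
    {P : C} {π₁ π₂ π₃ : P ⟶ Z} (hP : IsTripleLimit f g π₁ π₂ π₃) :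
    Difunctional (E.map f) (E.map g) := by
  obtain ⟨p, hpf, hpg⟩ := h.2 π₁ π₂ π₃ hP
  intro z₁ z₂ z₃ h₁₂ h₂₃
  obtain ⟨u, ⟨hu₁, -, hu₃⟩, -⟩ := hP.lift (hE.homEquiv.symm z₁) (hE.homEquiv.symm z₂)
    (hE.homEquiv.symm z₃) (by simp only [hE.homEquiv_symm_comp, h₁₂])
    (by simp only [hE.homEquiv_symm_comp, h₂₃])
  refine ⟨hE.homEquiv (u ≫ p), ?_, ?_⟩
  · rw [← hE.homEquiv_comp, Category.assoc, hpf, reassoc_of% hu₁, hE.homEquiv_comp,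
      Equiv.apply_symm_apply]
  · rw [← hE.homEquiv_comp, Category.assoc, hpg, reassoc_of% hu₃, hE.homEquiv_comp,
      Equiv.apply_symm_apply]

end GeneralizedElements

namespace CategoryTheory.Sheaf

variable {D : Type u} [SmallCategory D] {J : GrothendieckTopology D}

variable (J) in
noncomputable def evaluationCorepresentableBy (x : Dᵒᵖ) :
    (sheafToPresheaf J (Type u) ⋙ (evaluation Dᵒᵖ (Type u)).obj x).CorepresentableBy
      ((presheafToSheaf J (Type u)).obj (yoneda.obj x.unop)) where
  homEquiv := ((sheafificationAdjunction J (Type u)).homEquiv _ _).trans yonedaEquiv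
  homEquiv_comp g f := by
    dsimp only [Equiv.trans_apply]
    rw [Adjunction.homEquiv_naturality_right, yonedaEquiv_comp]
    rfl

theorem isUniversalColimit {K : Type*} [Category* K] [HasColimitsOfShape K (Type u)]
    {F : K ⥤ Sheaf J (Type u)} {c : Cocone F} (hc : IsColimit c) : IsUniversalColimit c :=
  isUniversalColimit_of_reflective (sheafificationAdjunction J (Type u))
    FunctorToTypes.isUniversalColimit hc

theorem isPullback_of_isPushout_of_isMalcevSpan {Z A B P : Sheaf J (Type u)} {f : Z ⟶ A}
    {g : Z ⟶ B} {h : A ⟶ P} {k : B ⟶ P} (hm : IsMalcevSpan f g) (hpo : IsPushout f g h k) :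
    IsPullback f g h k := by
  let Gr := sheafToPresheaf J (Type u)
  have hpo₀ := IsPushout.of_hasPushout (Gr.map f) (Gr.map g)
  refine isPullback_of_isPushout_of_reflective (sheafificationAdjunction J (Type u)) hpo hpo₀ ?_
  exact FunctorToTypes.isPullback_of_isPushout_of_difunctional hpo₀
    (fun x ↦ hm.1.injective_map (evaluationCorepresentableBy J x))
    (fun x ↦ hm.difunctional_map (evaluationCorepresentableBy J x) (isTripleLimit_pullback f g))

end CategoryTheory.Sheaf

/-- Every Grothendieck topos, i.e. every category of sheaves of sets on
a small site, is (finitely complete and) diexact. -/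
theorem grothendieckTopos_diexact {D : Type u} [SmallCategory D]
    (J : GrothendieckTopology D) :
    HasFiniteLimits (Sheaf J (Type u)) ∧ Diexact (Sheaf J (Type u)) := by
  refine ⟨inferInstance, fun Z A B f g hm ↦ ⟨⟨_, _, _, IsPushout.of_hasPushout f g⟩,
    fun P h k hpo ↦ ⟨?_, Sheaf.isPullback_of_isPushout_of_isMalcevSpan hm hpo⟩⟩⟩
  exact .of_isUniversalColimit hpo.w (Sheaf.isUniversalColimit hpo.isColimit)
end

section
/- In a finitely complete category, a jointly monic endospan (s : E → A, t : E → A) is an internal equivalence relation on A if and only if it is reflexive (the diagonal A → A × A factors through (s, t)) and is a Mal'cev span. -/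
open CategoryTheory CategoryTheory.Limits

universe v u

/-! On generalized elements, the Mal'cev condition says that the relation `R` presented by the
span is difunctional, `R R° R ⊆ R`: this only needs the triple limit to exist, which it does as an
iterated pullback. For an endorelation with a reflexivity map `r`, difunctionality applied to the
triples `(t ≫ r, 𝟙, s ≫ r)` and `(e₁, e₁ ≫ t ≫ r, e₂)` yields symmetry and transitivity;
conversely, a symmetric transitive relation satisfies `R R° R ⊆ R R R ⊆ R`. -/

namespace CategoryTheory

variable {C : Type u} [Category.{v} C]

section Span

variable {Z A B : C} (f : Z ⟶ A) (g : Z ⟶ B)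

def Difunctional : Prop :=
  ∀ ⦃X : C⦄ (x₁ x₂ x₃ : X ⟶ Z), x₁ ≫ g = x₂ ≫ g → x₂ ≫ f = x₃ ≫ f →
    ∃ y : X ⟶ Z, y ≫ f = x₁ ≫ f ∧ y ≫ g = x₃ ≫ g

theorem exists_isTripleLimit [HasPullbacks C] :
    ∃ (P : C) (π₁ π₂ π₃ : P ⟶ Z), IsTripleLimit f g π₁ π₂ π₃ := by
  refine ⟨pullback (pullback.snd g g ≫ f) f, pullback.fst _ _ ≫ pullback.fst g g,
    pullback.fst _ _ ≫ pullback.snd g g, pullback.snd _ _, ?_⟩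
  refine ⟨by simp only [Category.assoc, pullback.condition],
    by simp only [Category.assoc, pullback.condition], ?_⟩
  intro X x₁ x₂ x₃ h₁ h₂
  refine ⟨pullback.lift (pullback.lift x₁ x₂ h₁) x₃ (by rw [pullback.lift_snd_assoc, h₂]),
    by simp [pullback.lift_fst_assoc, pullback.lift_fst, pullback.lift_snd], ?_⟩
  rintro u ⟨rfl, rfl, rfl⟩
  ext <;> simp [pullback.lift_fst, pullback.lift_snd]

theorem isMalcevSpan_iff_difunctional [HasPullbacks C] :
    IsMalcevSpan f g ↔ JointlyMonic f g ∧ Difunctional f g := by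
  refine and_congr_right fun _ => ⟨fun hmal X x₁ x₂ x₃ h₁ h₂ => ?_,
    fun hd P π₁ π₂ π₃ hT => hd π₁ π₂ π₃ hT.w₁ hT.w₂⟩
  obtain ⟨P, π₁, π₂, π₃, hT⟩ := exists_isTripleLimit f g
  obtain ⟨p, hpf, hpg⟩ := hmal π₁ π₂ π₃ hT
  obtain ⟨u, ⟨hu₁, -, hu₃⟩, -⟩ := hT.lift x₁ x₂ x₃ h₁ h₂
  exact ⟨u ≫ p, by rw [Category.assoc, hpf, ← Category.assoc, hu₁],
    by rw [Category.assoc, hpg, ← Category.assoc, hu₃]⟩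

end Span

section Endorelation

variable {E A : C} {s t : E ⟶ A}

theorem Difunctional.symm {r : A ⟶ E} (hrs : r ≫ s = 𝟙 A) (hrt : r ≫ t = 𝟙 A)
    (hd : Difunctional s t) : ∃ σ : E ⟶ E, σ ≫ s = t ∧ σ ≫ t = s := by
  obtain ⟨σ, hσs, hσt⟩ := hd (t ≫ r) (𝟙 E) (s ≫ r) (by simp [hrt]) (by simp [hrs])
  exact ⟨σ, by simpa [hrs] using hσs, by simpa [hrt] using hσt⟩

theorem Difunctional.trans [HasPullbacks C] {r : A ⟶ E} (hrs : r ≫ s = 𝟙 A)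
    (hrt : r ≫ t = 𝟙 A) (hd : Difunctional s t) :
    ∃ τ : pullback t s ⟶ E,
      τ ≫ s = pullback.fst t s ≫ s ∧ τ ≫ t = pullback.snd t s ≫ t :=
  hd (pullback.fst t s) (pullback.fst t s ≫ t ≫ r) (pullback.snd t s)
    (by simp [hrt]) (by simp [hrs, pullback.condition])

theorem exists_comp_of_trans [HasPullbacks C] {τ : pullback t s ⟶ E}
    (hτs : τ ≫ s = pullback.fst t s ≫ s) (hτt : τ ≫ t = pullback.snd t s ≫ t)
    {X : C} (x y : X ⟶ E) (h : x ≫ t = y ≫ s) :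
    ∃ z : X ⟶ E, z ≫ s = x ≫ s ∧ z ≫ t = y ≫ t :=
  ⟨pullback.lift x y h ≫ τ, by simp [hτs, pullback.lift_fst_assoc],
    by simp [hτt, pullback.lift_snd_assoc]⟩

theorem difunctional_of_symm_of_trans [HasPullbacks C] {σ : E ⟶ E} (hσs : σ ≫ s = t)
    (hσt : σ ≫ t = s) {τ : pullback t s ⟶ E} (hτs : τ ≫ s = pullback.fst t s ≫ s)
    (hτt : τ ≫ t = pullback.snd t s ≫ t) : Difunctional s t := by
  intro X x₁ x₂ x₃ h₁ h₂
  obtain ⟨y, hys, hyt⟩ := exists_comp_of_trans hτs hτt x₁ (x₂ ≫ σ) (by simp [hσs, h₁])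
  obtain ⟨z, hzs, hzt⟩ := exists_comp_of_trans hτs hτt y x₃ (by simp [hyt, hσt, h₂])
  exact ⟨z, hzs.trans hys, hzt⟩

end Endorelation

end CategoryTheory

/-- In a finitely complete category, a jointly monic endospan
`(s, t) : E ⇉ A` is an internal equivalence relation if and only if it is reflexive and
is a Mal'cev span. -/
theorem equivRelation_iff_reflexive_malcev {C : Type u} [Category.{v} C]
    [HasFiniteLimits C] {E A : C} (s t : E ⟶ A) (hjm : JointlyMonic s t) :
    IsEquivRelation s t ↔
      ((∃ r : A ⟶ E, r ≫ s = 𝟙 A ∧ r ≫ t = 𝟙 A) ∧ IsMalcevSpan s t) := by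
  rw [isMalcevSpan_iff_difunctional]
  constructor
  · rintro ⟨-, hrefl, ⟨σ, hσs, hσt⟩, ⟨τ, hτs, hτt⟩⟩
    exact ⟨hrefl, hjm, difunctional_of_symm_of_trans hσs hσt hτs hτt⟩
  · rintro ⟨⟨r, hrs, hrt⟩, -, hd⟩
    exact ⟨hjm, ⟨r, hrs, hrt⟩, hd.symm hrs hrt, hd.trans hrs hrt⟩
end

section
/- The category of pointed sets is diexact. -/
open CategoryTheory CategoryTheory.Limits

universe v u

/-!
The forgetful functor `Pointed ⥤ Type` preserves and reflects pullbacks and pushouts: pushouts of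
pointed sets are computed on underlying sets, and the functor reflects isomorphisms. So everything
happens in sets. There the pushout of `f, g` is `A ⊕ B` modulo the equivalence generated by
`f z ~ g z`, and a zigzag of such steps lifts along any pullback of the square, so every pushout of
sets is stable under pullback. For a Mal'cev span the relation `{(f z, g z)}` is difunctional (apply
the Mal'cev operation to witnesses), so the class of `a` meets `B` exactly in the `b` related to `a`:
the pushout square is a pullback.
-/

open Relation

theorem Quot.bijective_lift_iff {α : Type*} {β : Sort*} {r : α → α → Prop} {ε : α → β}
    (hε : ∀ x y, r x y → ε x = ε y) :
    Function.Bijective (Quot.lift ε hε) ↔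
      Function.Surjective ε ∧ ∀ x y, ε x = ε y → EqvGen r x y := by
  rw [Function.Bijective, Quot.surjective_lift, and_comm]
  refine and_congr_right fun _ => ⟨fun hinj x y hxy => Quot.eqvGen_exact (hinj hxy), ?_⟩
  rintro H ⟨x⟩ ⟨y⟩ hxy
  exact Quot.eqvGen_sound (H x y hxy)

theorem Relation.EqvGen.apply_eq {α : Type*} {β : Sort*} {r : α → α → Prop} {φ : α → β}
    (hφ : ∀ x y, r x y → φ x = φ y) {x y : α} (h : EqvGen r x y) : φ x = φ y :=
  congrArg (Quot.lift φ hφ) (Quot.eqvGen_sound h)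

/-- Zigzags lift along a pullback: `comm`, `lift` and `uniq` say that `X'` is `X ×_D D'`. -/
theorem Relation.EqvGen.of_map_of_pullback {X X' D D' : Type*} {r : X → X → Prop}
    {r' : X' → X' → Prop} {α : X' → X} {ε : X → D} {ε' : X' → D'} {δ : D' → D}
    (comm : ∀ x', ε (α x') = δ (ε' x')) (lift : ∀ x d', ε x = δ d' → ∃ x', α x' = x ∧ ε' x' = d')
    (uniq : ∀ x' y', α x' = α y' → ε' x' = ε' y' → x' = y')
    (hr : ∀ x y, r x y → ε x = ε y) (hr' : ∀ x' y', r (α x') (α y') → ε' x' = ε' y' → r' x' y')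
    {x' y' : X'} (h : EqvGen r (α x') (α y')) (he : ε' x' = ε' y') : EqvGen r' x' y' := by
  suffices ∀ x y, EqvGen r x y → ∀ x' y', α x' = x → α y' = y → ε' x' = ε' y' →
      EqvGen r' x' y' from this _ _ h _ _ rfl rfl he
  intro x y hxy
  induction hxy with
  | rel x y hxy => rintro x' y' rfl rfl he; exact .rel _ _ (hr' x' y' hxy he)
  | refl x => rintro x' y' rfl hy he; rw [uniq x' y' hy.symm he]; exact .refl _
  | symm x y _ ih => exact fun x' y' hx hy he => (ih y' x' hy hx he.symm).symm
  | trans x y z hxy _ ih₁ ih₂ =>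
    rintro x' z' rfl rfl he
    obtain ⟨y', rfl, hy'⟩ := lift y (ε' x') ((hxy.apply_eq hr).symm.trans (comm x'))
    exact (ih₁ x' y' rfl rfl hy'.symm).trans _ _ _ (ih₂ y' z' rfl rfl (hy'.trans he))

namespace CategoryTheory.Limits.Types

variable {Z A B D : Type u} {f : Z ⟶ A} {g : Z ⟶ B} {h : A ⟶ D} {k : B ⟶ D}

theorem Pushout.rel_iff {x y : A ⊕ B} :
    Pushout.Rel f g x y ↔ ∃ z, x = .inl (f z) ∧ y = .inr (g z) :=
  ⟨by rintro ⟨z⟩; exact ⟨z, rfl, rfl⟩, by rintro ⟨z, rfl, rfl⟩; exact ⟨z⟩⟩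

variable (f g h k) in
theorem isPushout_iff : IsPushout f g h k ↔ f ≫ h = g ≫ k ∧ Function.Surjective (Sum.elim h k) ∧
    ∀ x y, Sum.elim h k x = Sum.elim h k y → EqvGen (Pushout.Rel f g) x y := by
  have hp₀ : IsPushout f g (Pushout.inl f g) (Pushout.inr f g) :=
    .of_isColimit (Pushout.isColimitCocone f g)
  let φ (w : f ≫ h = g ≫ k) : Pushout f g ⟶ D :=
    ↾(Quot.lift (Sum.elim h k) (by rintro _ _ ⟨z⟩; exact ConcreteCategory.congr_hom w z))
  suffices ∀ w, IsPushout f g h k ↔ IsIso (φ w) by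
    refine ⟨fun hp => ⟨hp.w, ?_⟩, fun ⟨w, H⟩ => ?_⟩
    · exact (Quot.bijective_lift_iff _).1 ((isIso_iff_bijective _).1 ((this hp.w).1 hp))
    · exact (this w).2 ((isIso_iff_bijective _).2 ((Quot.bijective_lift_iff _).2 H))
  refine fun w => ⟨fun hp => ?_, fun _ =>
    hp₀.of_iso (Iso.refl _) (Iso.refl _) (Iso.refl _) (asIso (φ w)) (by simp) (by simp) rfl rfl⟩
  convert (hp₀.isoIsPushout _ _ hp).isIso_hom
  exact hp₀.hom_ext (by rw [IsPushout.inl_isoIsPushout_hom]; rfl)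
    (by rw [IsPushout.inr_isoIsPushout_hom]; rfl)

theorem pushoutStable_of_isPushout (hp : IsPushout f g h k) : PushoutStable f g h k := by
  intro Z' A' B' D' f' g' h' k' αZ αA αB αD hf hg hh hk w'
  obtain ⟨-, surj, ker⟩ := (isPushout_iff f g h k).1 hp
  have comm : ∀ x', Sum.elim h k (Sum.map αA αB x') = αD (Sum.elim h' k' x') := by
    rintro (a' | b')
    exacts [(ConcreteCategory.congr_hom hh.w a').symm, (ConcreteCategory.congr_hom hk.w b').symm]
  have lift : ∀ x d', Sum.elim h k x = αD d' →
      ∃ x', Sum.map αA αB x' = x ∧ Sum.elim h' k' x' = d' := by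
    rintro (a | b) d' he
    · obtain ⟨a', h₁, h₂⟩ := exists_of_isPullback hh d' a he.symm
      exact ⟨.inl a', by rw [Sum.map_inl, h₂], h₁⟩
    · obtain ⟨b', h₁, h₂⟩ := exists_of_isPullback hk d' b he.symm
      exact ⟨.inr b', by rw [Sum.map_inr, h₂], h₁⟩
  have uniq : ∀ x' y', Sum.map αA αB x' = Sum.map αA αB y' →
      Sum.elim h' k' x' = Sum.elim h' k' y' → x' = y' := by
    rintro (a₁ | b₁) (a₂ | b₂) hα he <;>
      simp only [Sum.map_inl, Sum.map_inr, Sum.inl.injEq, Sum.inr.injEq, reduceCtorEq] at hα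
    · exact congrArg _ (ext_of_isPullback hh he hα)
    · exact congrArg _ (ext_of_isPullback hk he hα)
  have rel : ∀ x' y', Pushout.Rel f g (Sum.map αA αB x') (Sum.map αA αB y') →
      Sum.elim h' k' x' = Sum.elim h' k' y' → Pushout.Rel f' g' x' y' := by
    rintro (a' | b') (a'' | b') hr he <;> obtain ⟨z, hx, hy⟩ := Pushout.rel_iff.1 hr <;>
      simp only [Sum.map_inl, Sum.map_inr, Sum.inl.injEq, Sum.inr.injEq, reduceCtorEq] at hx hy
    obtain ⟨z', rfl, rfl⟩ := exists_of_isPullback hf a' z hx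
    obtain rfl : g' z' = b' := ext_of_isPullback hk
      ((ConcreteCategory.congr_hom w' z').symm.trans he)
      ((ConcreteCategory.congr_hom hg.w z').trans hy.symm)
    exact ⟨z'⟩
  refine (isPushout_iff f' g' h' k').2 ⟨w', fun d' => ?_, fun x' y' he => ?_⟩
  · obtain ⟨x, hx⟩ := surj (αD d')
    obtain ⟨x', -, hx'⟩ := lift x d' hx
    exact ⟨x', hx'⟩
  · exact EqvGen.of_map_of_pullback comm lift uniq
      (fun _ _ ⟨z⟩ => ConcreteCategory.congr_hom hp.w z) rel (ker _ _ (by rw [comm, comm, he])) he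

theorem isPullback_of_isPushout_of_difunctional_s17 (hp : IsPushout f g h k)
    (hinj : ∀ z z', f z = f z' → g z = g z' → z = z')
    (hdif : ∀ z₁ z₂ z₃, g z₁ = g z₂ → f z₂ = f z₃ → ∃ z, f z = f z₁ ∧ g z = g z₃) :
    IsPullback f g h k := by
  refine (isPullback_iff f h g k).2 ⟨hp.w, fun z z' h => hinj z z' h.1 h.2, fun a b hab => ?_⟩
  obtain ⟨-, -, ker⟩ := (isPushout_iff f g h k).1 hp
  -- the equivalence class of `inl a`, as difunctionality describes it
  let P : A ⊕ B → Prop := Sum.elim (fun a' => a' = a ∨ ∃ z z', f z = a ∧ f z' = a' ∧ g z = g z')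
    (fun b' => ∃ z, f z = a ∧ g z = b')
  have hP : ∀ x y, Pushout.Rel f g x y → P x = P y := by
    rintro _ _ ⟨z₀⟩
    refine propext ⟨?_, ?_⟩
    · rintro (rfl | ⟨z, z', rfl, hz', hg⟩)
      · exact ⟨z₀, rfl, rfl⟩
      · exact hdif z z' z₀ hg hz'
    · rintro ⟨z, rfl, hz⟩
      exact .inr ⟨z, z₀, rfl, rfl, hz⟩
  exact cast ((ker (.inl a) (.inr b) hab).apply_eq hP) (Or.inl rfl)

end CategoryTheory.Limits.Types

namespace Pointed

variable {Z A B : Pointed.{u}}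

instance : PreservesLimits (forget Pointed.{u}) :=
  typeToPointedForgetAdjunction.rightAdjoint_preservesLimits

instance : (forget Pointed.{u}).ReflectsIsomorphisms where
  reflects f _ := (Iso.mk (Equiv.ofBijective _
    ((isIso_iff_bijective ((forget Pointed).map f)).1 inferInstance)) f.map_point).isIso_hom

def limitCone {J : Type u} [SmallCategory J] (F : J ⥤ Pointed.{u}) : Cone F where
  pt := ⟨{ s : ∀ j, F.obj j // ∀ {j j'} (φ : j ⟶ j'), F.map φ (s j) = s j' },
    ⟨fun j => (F.obj j).point, fun φ => (F.map φ).map_point⟩⟩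
  π :=
    { app j := ⟨fun s => s.1 j, rfl⟩
      naturality _ _ φ := Hom.ext (funext fun s => (s.2 φ).symm) }

def limitConeIsLimit {J : Type u} [SmallCategory J] (F : J ⥤ Pointed.{u}) :
    IsLimit (limitCone F) where
  lift s := ⟨fun x => ⟨fun j => s.π.app j x, fun φ => ConcreteCategory.congr_hom (s.w φ) x⟩,
    Subtype.ext (funext fun j => (s.π.app j).map_point)⟩
  uniq s m hm := Hom.ext (funext fun x =>
    Subtype.ext (funext fun j => ConcreteCategory.congr_hom (hm j) x))

instance : HasLimits Pointed.{u} :=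
  ⟨fun _ _ => ⟨fun F => ⟨⟨⟨limitCone F, limitConeIsLimit F⟩⟩⟩⟩⟩

instance : ReflectsLimits (forget Pointed.{u}) :=
  reflectsLimits_of_reflectsIsomorphisms

def pushoutCocone (f : Z ⟶ A) (g : Z ⟶ B) : PushoutCocone f g :=
  PushoutCocone.mk (W := ⟨Types.Pushout ((forget Pointed).map f) ((forget Pointed).map g),
      Quot.mk _ (.inl A.point)⟩)
    ⟨fun a => Quot.mk _ (.inl a), rfl⟩
    ⟨fun b => Quot.mk _ (.inr b), by
      rw [← f.map_point, ← g.map_point]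
      exact (Quot.sound (Types.Pushout.Rel.inl_inr Z.point)).symm⟩
    (Hom.ext (funext fun z => Quot.sound (Types.Pushout.Rel.inl_inr z)))

def pushoutCoconeIsColimit (f : Z ⟶ A) (g : Z ⟶ B) : IsColimit (pushoutCocone f g) :=
  PushoutCocone.IsColimit.mk _
    (fun s => ⟨Quot.lift (Sum.elim s.inl s.inr)
      (by rintro _ _ ⟨z⟩; exact ConcreteCategory.congr_hom s.condition z), s.inl.map_point⟩)
    (fun _ => rfl) (fun _ => rfl)
    (fun _ _ h₁ h₂ => Hom.ext (funext (Quot.ind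
      (Sum.rec (ConcreteCategory.congr_hom h₁) (ConcreteCategory.congr_hom h₂)))))

instance : HasPushouts Pointed.{u} :=
  @hasPushouts_of_hasColimit_span _ _ fun {_ _ _ f g} => ⟨⟨⟨_, pushoutCoconeIsColimit f g⟩⟩⟩

instance (f : Z ⟶ A) (g : Z ⟶ B) : PreservesColimit (span f g) (forget Pointed) :=
  preservesColimit_of_preserves_colimit_cocone (pushoutCoconeIsColimit f g)
    ((isColimitMapCoconePushoutCoconeEquiv _ _).symm (Types.Pushout.isColimitCocone _ _))

instance (f : Z ⟶ A) (g : Z ⟶ B) : ReflectsColimit (span f g) (forget Pointed) :=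
  reflectsColimit_of_reflectsIsomorphisms _ _

theorem pushoutStable_of_isPushout {D : Pointed.{u}} {f : Z ⟶ A} {g : Z ⟶ B} {h : A ⟶ D}
    {k : B ⟶ D} (hp : IsPushout f g h k) : PushoutStable f g h k :=
  fun _ _ _ _ _ _ _ _ _ _ _ _ hf hg hh hk w' =>
    (Types.pushoutStable_of_isPushout (hp.map (forget _)) _ _ _ _ _ _ _ _ (hf.map _) (hg.map _)
      (hh.map _) (hk.map _) (by rw [← Functor.map_comp, w', Functor.map_comp])).of_map _ w'

def homOfElement {X : Pointed.{u}} (x : X) : typeToPointed.obj PUnit ⟶ X :=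
  ⟨fun o => o.elim X.point fun _ => x, rfl⟩

theorem homOfElement_comp {X Y : Pointed.{u}} (x : X) (φ : X ⟶ Y) :
    homOfElement x ≫ φ = homOfElement (φ x) := by
  ext (_ | _)
  exacts [φ.map_point, rfl]

theorem eq_of_jointlyMonic {f : Z ⟶ A} {g : Z ⟶ B} (hfg : JointlyMonic f g) {z z' : Z}
    (hf : f z = f z') (hg : g z = g z') : z = z' :=
  congrFun (congrArg Hom.toFun (hfg (homOfElement z) (homOfElement z')
    (by rw [homOfElement_comp, homOfElement_comp, hf])
    (by rw [homOfElement_comp, homOfElement_comp, hg]))) (some PUnit.unit)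

def tripleLimit (f : Z ⟶ A) (g : Z ⟶ B) : Pointed.{u} :=
  ⟨{ t : Z × Z × Z // g t.1 = g t.2.1 ∧ f t.2.1 = f t.2.2 },
    ⟨(Z.point, Z.point, Z.point), rfl, rfl⟩⟩

theorem isTripleLimit_tripleLimit (f : Z ⟶ A) (g : Z ⟶ B) :
    IsTripleLimit f g (P := tripleLimit f g) ⟨fun t => t.1.1, rfl⟩ ⟨fun t => t.1.2.1, rfl⟩
      ⟨fun t => t.1.2.2, rfl⟩ where
  w₁ := Hom.ext (funext fun t => t.2.1)
  w₂ := Hom.ext (funext fun t => t.2.2)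
  lift X x₁ x₂ x₃ h₁ h₂ := by
    refine ⟨⟨fun x => ⟨(x₁ x, x₂ x, x₃ x), ConcreteCategory.congr_hom h₁ x,
      ConcreteCategory.congr_hom h₂ x⟩, ?_⟩, ⟨rfl, rfl, rfl⟩, ?_⟩
    · exact Subtype.ext (Prod.ext x₁.map_point (Prod.ext x₂.map_point x₃.map_point))
    · rintro u ⟨rfl, rfl, rfl⟩
      rfl

theorem difunctional_of_isMalcevSpan {f : Z ⟶ A} {g : Z ⟶ B} (hfg : IsMalcevSpan f g)
    (z₁ z₂ z₃ : Z) (h₁ : g z₁ = g z₂) (h₂ : f z₂ = f z₃) : ∃ z, f z = f z₁ ∧ g z = g z₃ := by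
  obtain ⟨p, hpf, hpg⟩ := hfg.2 _ _ _ (isTripleLimit_tripleLimit f g)
  exact ⟨p ⟨(z₁, z₂, z₃), h₁, h₂⟩, ConcreteCategory.congr_hom hpf _,
    ConcreteCategory.congr_hom hpg _⟩

theorem isPullback_of_isPushout_of_isMalcevSpan {D : Pointed.{u}} {f : Z ⟶ A} {g : Z ⟶ B}
    {h : A ⟶ D} {k : B ⟶ D} (hfg : IsMalcevSpan f g) (hp : IsPushout f g h k) :
    IsPullback f g h k :=
  (Types.isPullback_of_isPushout_of_difunctional_s17 (hp.map (forget _))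
    (fun _ _ => eq_of_jointlyMonic hfg.1) (difunctional_of_isMalcevSpan hfg)).of_map _ hp.w

end Pointed

/-- The category of pointed sets is (finitely complete and) diexact. -/
theorem pointed_diexact : HasFiniteLimits Pointed ∧ Diexact Pointed :=
  ⟨inferInstance, fun _ _ _ f g hfg => ⟨⟨_, _, _, IsPushout.of_hasPushout f g⟩,
    fun _ _ _ hp => ⟨Pointed.pushoutStable_of_isPushout hp,
      Pointed.isPullback_of_isPushout_of_isMalcevSpan hfg hp⟩⟩⟩
end

section
/- If C is a diexact category, then for every object A of C the coslice category A/C (of objects under A) is diexact. -/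
open CategoryTheory CategoryTheory.Limits

universe v u

/-!
The forgetful functor `Under A ⥤ C` preserves and reflects pullbacks and pushouts (the latter being
connected colimits), and it preserves binary products and monomorphisms, hence joint monicity. A
triple limit in `C` of a span under `A` carries a unique structure map from `A` making it a triple
limit in `Under A`. So a Mal'cev span under `A` is a Mal'cev span in `C`, and its pushout in `C`,
with stability under pullback and the pullback property, lifts back to `Under A`.
-/

section JointlyMonic

variable {C : Type u} [Category.{v} C]

theorem jointlyMonic_iff_mono_prod_lift {Z X Y : C} [HasBinaryProduct X Y] (f : Z ⟶ X)
    (g : Z ⟶ Y) : JointlyMonic f g ↔ Mono (prod.lift f g) := by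
  refine ⟨fun h => ⟨fun u v huv => h u v ?_ ?_⟩, fun h T u v hf hg => ?_⟩
  · simpa only [Category.assoc, prod.lift_fst] using huv =≫ prod.fst
  · simpa only [Category.assoc, prod.lift_snd] using huv =≫ prod.snd
  · refine (cancel_mono (prod.lift f g)).1 (prod.hom_ext ?_ ?_)
    · simpa only [Category.assoc, prod.lift_fst] using hf
    · simpa only [Category.assoc, prod.lift_snd] using hg

theorem JointlyMonic.map {D : Type*} [Category D] (F : C ⥤ D) [F.PreservesMonomorphisms]
    {Z X Y : C} [HasBinaryProduct X Y] [HasBinaryProduct (F.obj X) (F.obj Y)]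
    [PreservesLimit (pair X Y) F] {f : Z ⟶ X} {g : Z ⟶ Y} (H : JointlyMonic f g) :
    JointlyMonic (F.map f) (F.map g) := by
  rw [jointlyMonic_iff_mono_prod_lift] at H ⊢
  have hlift : prod.lift (F.map f) (F.map g) = F.map (prod.lift f g) ≫ prodComparison F X Y := by
    ext
    · rw [Category.assoc, prodComparison_fst, ← F.map_comp, prod.lift_fst, prod.lift_fst]
    · rw [Category.assoc, prodComparison_snd, ← F.map_comp, prod.lift_snd, prod.lift_snd]
  rw [hlift]
  exact mono_comp _ _

end JointlyMonic

namespace CategoryTheory.Under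

variable {C : Type u} [Category.{v} C] {A : C}

instance [HasPullbacks C] : PreservesLimitsOfShape WalkingCospan (Under.forget A) :=
  inferInstanceAs (PreservesLimitsOfShape WalkingCospan (StructuredArrow.proj A (𝟭 C)))

instance [HasBinaryProducts C] : PreservesLimitsOfShape (Discrete WalkingPair) (Under.forget A) :=
  inferInstanceAs (PreservesLimitsOfShape (Discrete WalkingPair) (StructuredArrow.proj A (𝟭 C)))

theorem isPushout_iff_isPushout_right {Z X Y W : Under A} {f : Z ⟶ X} {g : Z ⟶ Y} {h : X ⟶ W}
    {k : Y ⟶ W} :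
    IsPushout f g h k ↔ IsPushout f.right g.right h.right k.right :=
  ⟨(Under.forget A).map_isPushout,
    fun H => H.of_map (Under.forget A) (UnderMorphism.ext (by simpa using H.w))⟩

theorem isPullback_iff_isPullback_right [HasPullbacks C] {P X Y W : Under A} {f : P ⟶ X}
    {g : P ⟶ Y} {h : X ⟶ W} {k : Y ⟶ W} :
    IsPullback f g h k ↔ IsPullback f.right g.right h.right k.right :=
  ⟨(Under.forget A).map_isPullback,
    fun H => H.of_map (Under.forget A) (UnderMorphism.ext (by simpa using H.w))⟩

theorem exists_isPushout_of_right {Z X Y : Under A} {f : Z ⟶ X} {g : Z ⟶ Y} {D : C}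
    {h : X.right ⟶ D} {k : Y.right ⟶ D} (H : IsPushout f.right g.right h k) :
    ∃ (W : Under A) (h' : X ⟶ W) (k' : Y ⟶ W), IsPushout f g h' k' := by
  have hk : Y.hom ≫ k = X.hom ≫ h := by
    rw [← Under.w g, ← Under.w f, Category.assoc, Category.assoc, H.w]
  exact ⟨Under.mk (X.hom ≫ h), Under.homMk h rfl, Under.homMk k hk,
    isPushout_iff_isPushout_right.2 H⟩

theorem pushoutStable_of_right [HasPullbacks C] {Z X Y W : Under A} {f : Z ⟶ X} {g : Z ⟶ Y}
    {h : X ⟶ W} {k : Y ⟶ W} (H : PushoutStable f.right g.right h.right k.right) :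
    PushoutStable f g h k := by
  intro Z' X' Y' W' f' g' h' k' αZ αX αY αW hf hg hh hk w
  rw [isPullback_iff_isPullback_right] at hf hg hh hk
  exact isPushout_iff_isPushout_right.2 <| H _ _ _ _ _ _ _ _ hf hg hh hk
    (by simpa using congrArg CommaMorphism.right w)

theorem isTripleLimit_homMk {Z X Y : Under A} {f : Z ⟶ X} {g : Z ⟶ Y} {P : C}
    {π₁ π₂ π₃ : P ⟶ Z.right} (H : IsTripleLimit f.right g.right π₁ π₂ π₃) {a : A ⟶ P}
    (h₁ : a ≫ π₁ = Z.hom) (h₂ : a ≫ π₂ = Z.hom) (h₃ : a ≫ π₃ = Z.hom) :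
    IsTripleLimit f g (Under.homMk π₁ h₁ : Under.mk a ⟶ Z) (Under.homMk π₂ h₂)
      (Under.homMk π₃ h₃) := by
  refine ⟨UnderMorphism.ext (by simpa using H.w₁), UnderMorphism.ext (by simpa using H.w₂),
    fun T x₁ x₂ x₃ e₁ e₂ => ?_⟩
  obtain ⟨u, ⟨hu₁, hu₂, hu₃⟩, hu⟩ := H.lift x₁.right x₂.right x₃.right
    (by simpa using congrArg CommaMorphism.right e₁)
    (by simpa using congrArg CommaMorphism.right e₂)
  -- Both `T.hom ≫ u` and `a` lift the constant triple `(Z.hom, Z.hom, Z.hom)`.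
  have hTu : T.hom ≫ u = a := (H.lift _ _ _ rfl rfl).unique
    ⟨by rw [Category.assoc, hu₁, Under.w], by rw [Category.assoc, hu₂, Under.w],
      by rw [Category.assoc, hu₃, Under.w]⟩ ⟨h₁, h₂, h₃⟩
  refine ⟨Under.homMk u hTu, ⟨?_, ?_, ?_⟩, fun v ⟨hv₁, hv₂, hv₃⟩ => UnderMorphism.ext ?_⟩
  · exact UnderMorphism.ext (by simpa using hu₁)
  · exact UnderMorphism.ext (by simpa using hu₂)
  · exact UnderMorphism.ext (by simpa using hu₃)
  · exact hu v.right ⟨by simpa using congrArg CommaMorphism.right hv₁,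
      by simpa using congrArg CommaMorphism.right hv₂,
      by simpa using congrArg CommaMorphism.right hv₃⟩

theorem isMalcevSpan_right [HasPullbacks C] [HasBinaryProducts C] {Z X Y : Under A}
    {f : Z ⟶ X} {g : Z ⟶ Y} (H : IsMalcevSpan f g) : IsMalcevSpan f.right g.right := by
  refine ⟨H.1.map (Under.forget A), fun P π₁ π₂ π₃ hP => ?_⟩
  obtain ⟨a, ⟨h₁, h₂, h₃⟩, -⟩ := hP.lift Z.hom Z.hom Z.hom rfl rfl
  obtain ⟨p, hp₁, hp₃⟩ := H.2 _ _ _ (isTripleLimit_homMk hP h₁ h₂ h₃)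
  exact ⟨p.right, by simpa using congrArg CommaMorphism.right hp₁,
    by simpa using congrArg CommaMorphism.right hp₃⟩

end CategoryTheory.Under

/-- If `C` is a (finitely complete) diexact category, then for every
object `A` the coslice category `A/C` is (finitely complete and) diexact. -/
theorem coslice_diexact {C : Type u} [Category.{v} C] [HasFiniteLimits C]
    (hC : Diexact C) (A : C) :
    HasFiniteLimits (Under A) ∧ Diexact (Under A) := by
  refine ⟨StructuredArrow.hasFiniteLimits, fun Z X Y f g hM => ?_⟩
  obtain ⟨hExists, hPushouts⟩ := hC f.right g.right (Under.isMalcevSpan_right hM)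
  refine ⟨?_, fun W h k hpo => ?_⟩
  · obtain ⟨_, _, _, hpo⟩ := hExists
    exact Under.exists_isPushout_of_right hpo
  · obtain ⟨hStable, hPullback⟩ :=
      hPushouts h.right k.right (Under.isPushout_iff_isPushout_right.1 hpo)
    exact ⟨Under.pushoutStable_of_right hStable, Under.isPullback_iff_isPullback_right.2 hPullback⟩
end
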